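/- arXiv:2404.18666 — 3 statements merged into one kernel-verified Lean document; each statement's English description precedes it below -/
import Mathlib

section
/- Let n ∈ ℤ_{≥0}^r with n ≠ 0. The following are equivalent: (1) n is normal, i.e. det M_n ≠ 0; (2) every type II* multiple orthogonal polynomial Φ* for n satisfies Φ*(0) ≠ 0; (3) there exists a unique type II* multiple orthogonal polynomial Φ* for n with Φ*(0) = 1. -/
open MeasureTheory Polynomial

noncomputable section

/-- A system of measures on the unit circle: each `μ j` is a probability measure,
carried by the unit circle `∂𝔻 = {z : |z| = 1}`, with infinite support. -/
def MopucSystem {r : ℕ} (μ : Fin r → Measure ℂ) : Prop :=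
  ∀ j, IsProbabilityMeasure (μ j) ∧ μ j ((Metric.sphere (0 : ℂ) 1)ᶜ) = 0 ∧
    ∀ s : Set ℂ, s.Finite → μ j (sᶜ) ≠ 0

/-- The inner product `⟨P, Q⟩_μ = ∫ P(z)·conj (Q(z)) dμ(z)`. -/
def pip (μ : Measure ℂ) (P Q : Polynomial ℂ) : ℂ :=
  ∫ z, P.eval z * (starRingEnd ℂ) (Q.eval z) ∂μ

/-- `⟨P, z^p⟩_μ`. -/
def mip (μ : Measure ℂ) (P : Polynomial ℂ) (p : ℕ) : ℂ :=
  pip μ P (X ^ p)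

/-- The moment `ν^p = ∫ z^p dμ(z)` for `p ∈ ℤ` (on the circle `z^{-m} = conj (z^m)`). -/
def mom (μ : Measure ℂ) (p : ℤ) : ℂ :=
  ∫ z, z ^ p ∂μ

/-- The linear position of the pair `(j, q)` (with `q < n j`): `(∑_{i<j} n i) + q`.
This enumerates the pairs, in lexicographic order, by `0, 1, …, |n| − 1`. -/
def linIdx {r : ℕ} (n : Fin r → ℕ) (c : (j : Fin r) × Fin (n j)) : ℕ :=
  (∑ i ∈ Finset.univ.filter (fun i => i < c.1), n i) + (c.2 : ℕ)

/-- The moment matrix `M_n`: rows are indexed by pairs `(j, q)` with `1 ≤ j ≤ r`,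
`0 ≤ q ≤ n j − 1`, columns by `p = 0, …, |n| − 1` (realized as pairs via the
order-preserving enumeration `linIdx`), and the entry at `((j,q), p)` is `ν_j^{p−q}`. -/
def Mmat {r : ℕ} (μ : Fin r → Measure ℂ) (n : Fin r → ℕ) :
    Matrix ((j : Fin r) × Fin (n j)) ((j : Fin r) × Fin (n j)) ℂ :=
  Matrix.of fun rq c => mom (μ rq.1) ((linIdx n c : ℤ) - ((rq.2 : ℕ) : ℤ))

/-- The index `n` is normal if `det M_n ≠ 0`.  (For `n = 0` the matrix is empty and its
determinant is `1`, so `n = 0` is normal, matching the convention of the paper.) -/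
def NormalIndex {r : ℕ} (μ : Fin r → Measure ℂ) (n : Fin r → ℕ) : Prop :=
  (Mmat μ n).det ≠ 0

/-- A type II multiple orthogonal polynomial for the multi-index `n`. -/
def IsTypeII {r : ℕ} (μ : Fin r → Measure ℂ) (n : Fin r → ℕ) (P : Polynomial ℂ) : Prop :=
  P ≠ 0 ∧ P.degree ≤ ((∑ j, n j : ℕ) : WithBot ℕ) ∧
    ∀ j, ∀ p : ℕ, p < n j → mip (μ j) P p = 0

/-- A type II* multiple orthogonal polynomial for the multi-index `n`. -/
def IsTypeIIStar {r : ℕ} (μ : Fin r → Measure ℂ) (n : Fin r → ℕ) (P : Polynomial ℂ) : Prop :=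
  P ≠ 0 ∧ P.degree ≤ ((∑ j, n j : ℕ) : WithBot ℕ) ∧
    ∀ j, ∀ p : ℕ, 1 ≤ p → p ≤ n j → mip (μ j) P p = 0

/-- A type I multiple orthogonal polynomial for the multi-index `n`:
a nonzero vector of polynomials with `deg (L j) ≤ n j − 1` (so `L j = 0` when `n j = 0`),
and `∑_j ⟨L j, z^p⟩_j = 0` for `p = 0, …, |n| − 2`. -/
def IsTypeI {r : ℕ} (μ : Fin r → Measure ℂ) (n : Fin r → ℕ) (L : Fin r → Polynomial ℂ) : Prop :=
  L ≠ 0 ∧ (∀ j, (L j).degree < ((n j : ℕ) : WithBot ℕ)) ∧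
    ∀ p : ℕ, p + 2 ≤ ∑ j, n j → ∑ j, mip (μ j) (L j) p = 0

/-- A type I* multiple orthogonal polynomial for the multi-index `n`:
a nonzero vector of polynomials with `deg (L j) ≤ n j − 1`,
and `∑_j ⟨L j, z^p⟩_j = 0` for `p = 1, …, |n| − 1`. -/
def IsTypeIStar {r : ℕ} (μ : Fin r → Measure ℂ) (n : Fin r → ℕ) (L : Fin r → Polynomial ℂ) : Prop :=
  L ≠ 0 ∧ (∀ j, (L j).degree < ((n j : ℕ) : WithBot ℕ)) ∧
    ∀ p : ℕ, 1 ≤ p → p + 1 ≤ ∑ j, n j → ∑ j, mip (μ j) (L j) p = 0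

/-- `Φ_n`: the monic type II polynomial of degree exactly `|n|`. -/
def IsPhi {r : ℕ} (μ : Fin r → Measure ℂ) (n : Fin r → ℕ) (P : Polynomial ℂ) : Prop :=
  IsTypeII μ n P ∧ P.Monic ∧ P.natDegree = ∑ j, n j

/-- `Φ*_n`: the type II* polynomial with `Φ*_n(0) = 1`. -/
def IsPhiStar {r : ℕ} (μ : Fin r → Measure ℂ) (n : Fin r → ℕ) (P : Polynomial ℂ) : Prop :=
  IsTypeIIStar μ n P ∧ P.eval 0 = 1

/-- `Λ_n`: the type I vector normalized by `∑_j ⟨Λ_{n,j}, z^{|n|−1}⟩_j = 1`. -/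
def IsLambda {r : ℕ} (μ : Fin r → Measure ℂ) (n : Fin r → ℕ) (L : Fin r → Polynomial ℂ) : Prop :=
  IsTypeI μ n L ∧ ∑ j, mip (μ j) (L j) ((∑ i, n i) - 1) = 1

/-- `Λ*_n`: the type I* vector normalized by `∑_j ⟨Λ*_{n,j}, 1⟩_j = 1`. -/
def IsLambdaStar {r : ℕ} (μ : Fin r → Measure ℂ) (n : Fin r → ℕ) (L : Fin r → Polynomial ℂ) : Prop :=
  IsTypeIStar μ n L ∧ ∑ j, mip (μ j) (L j) 0 = 1

/-- The multi-index `n + e_k`. -/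
def eAdd {r : ℕ} (n : Fin r → ℕ) (k : Fin r) : Fin r → ℕ :=
  Function.update n k (n k + 1)

/-- The multi-index `n − e_k` (used only when `n k ≥ 1`). -/
def eSub {r : ℕ} (n : Fin r → ℕ) (k : Fin r) : Fin r → ℕ :=
  Function.update n k (n k - 1)

lemma filt_eq {r : ℕ} (j : Fin r) :
    Finset.univ.filter (fun i => i < j) = Finset.Iio j := by
  ext i; simp

lemma linIdx_lt {r : ℕ} (n : Fin r → ℕ) (c : (j : Fin r) × Fin (n j)) :
    linIdx n c < ∑ j, n j := by
  unfold linIdx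
  rw [filt_eq]
  have h1 : (∑ i ∈ Finset.Iio c.1, n i) + (c.2 : ℕ) < ∑ i ∈ Finset.Iic c.1, n i := by
    rw [← Finset.Iio_insert, Finset.sum_insert (by simp)]
    have := c.2.isLt; omega
  have h2 : ∑ i ∈ Finset.Iic c.1, n i ≤ ∑ j, n j :=
    Finset.sum_le_sum_of_subset (Finset.subset_univ _)
  omega

lemma linIdx_inj {r : ℕ} (n : Fin r → ℕ) : Function.Injective (linIdx n) := by
  rintro ⟨j, q⟩ ⟨j', q'⟩ h
  unfold linIdx at h
  simp only [filt_eq] at h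
  rcases lt_trichotomy j j' with hj | hj | hj
  · exfalso
    have h1 : (∑ i ∈ Finset.Iio j, n i) + (q:ℕ) < ∑ i ∈ Finset.Iic j, n i := by
      rw [← Finset.Iio_insert, Finset.sum_insert (by simp)]; omega
    have h2 : ∑ i ∈ Finset.Iic j, n i ≤ ∑ i ∈ Finset.Iio j', n i :=
      Finset.sum_le_sum_of_subset (fun i hi => by
        simp only [Finset.mem_Iic, Finset.mem_Iio] at *; exact lt_of_le_of_lt hi hj)
    omega
  · subst hj
    have : (q:ℕ) = (q':ℕ) := by omega
    exact Sigma.ext rfl (heq_of_eq (Fin.ext this))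
  · exfalso
    have h1 : (∑ i ∈ Finset.Iio j', n i) + (q':ℕ) < ∑ i ∈ Finset.Iic j', n i := by
      rw [← Finset.Iio_insert, Finset.sum_insert (by simp)]; omega
    have h2 : ∑ i ∈ Finset.Iic j', n i ≤ ∑ i ∈ Finset.Iio j, n i :=
      Finset.sum_le_sum_of_subset (fun i hi => by
        simp only [Finset.mem_Iic, Finset.mem_Iio] at *; exact lt_of_le_of_lt hi hj)
    omega

def linE {r : ℕ} (n : Fin r → ℕ) : ((j : Fin r) × Fin (n j)) ≃ Fin (∑ j, n j) :=
  Equiv.ofBijective (fun c => ⟨linIdx n c, linIdx_lt n c⟩)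
    ((Fintype.bijective_iff_injective_and_card _).mpr
      ⟨fun a b h => linIdx_inj n (by simpa [Fin.ext_iff] using h), by simp⟩)

lemma sum_reindex {r : ℕ} (n : Fin r → ℕ) (f : ℕ → ℂ) :
    ∑ p ∈ Finset.range (∑ j, n j), f p = ∑ c : (j : Fin r) × Fin (n j), f (linIdx n c) := by
  rw [Finset.sum_range fun p => f p]
  exact (Equiv.sum_comp (linE n) (fun p : Fin (∑ j, n j) => f p)).symm

lemma exists_linIdx {r : ℕ} (n : Fin r → ℕ) (m : ℕ) (hm : m < ∑ j, n j) :
    ∃ c : (j : Fin r) × Fin (n j), linIdx n c = m := by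
  obtain ⟨c, hc⟩ := (linE n).surjective ⟨m, hm⟩
  exact ⟨c, congrArg Fin.val hc⟩

lemma ae_sphere {μ : Measure ℂ} (hs : μ ((Metric.sphere (0 : ℂ) 1)ᶜ) = 0) :
    ∀ᵐ z ∂μ, ‖z‖ = 1 := by
  rw [ae_iff]
  convert hs using 2
  ext z
  simp [Metric.mem_sphere, dist_eq_norm]

lemma integrable_mono_conj {μ : Measure ℂ} [IsProbabilityMeasure μ]
    (hs : μ ((Metric.sphere (0 : ℂ) 1)ᶜ) = 0) (m p : ℕ) :
    Integrable (fun z : ℂ => z ^ m * (starRingEnd ℂ) z ^ p) μ := by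
  refine ⟨(Continuous.aestronglyMeasurable (by continuity)), ?_⟩
  refine HasFiniteIntegral.of_bounded (C := 1) ?_
  filter_upwards [ae_sphere hs] with z hz
  simp [norm_mul, norm_pow, hz]

lemma mip_eq_sum {μ : Measure ℂ} [IsProbabilityMeasure μ]
    (hs : μ ((Metric.sphere (0 : ℂ) 1)ᶜ) = 0) (P : Polynomial ℂ) (N : ℕ)
    (hP : P.natDegree < N + 1) (p : ℕ) :
    mip μ P p = ∑ m ∈ Finset.range (N + 1), P.coeff m * mom μ ((m : ℤ) - p) := by
  have key : ∀ m : ℕ, (∫ z, z ^ m * (starRingEnd ℂ) z ^ p ∂μ) = mom μ ((m : ℤ) - p) := by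
    intro m
    refine integral_congr_ae ?_
    filter_upwards [ae_sphere hs] with z hz
    have hz0 : z ≠ 0 := by intro h; simp [h] at hz
    have hconj : (starRingEnd ℂ) z = z⁻¹ := by
      have h1 : z * (starRingEnd ℂ) z = 1 := by
        rw [Complex.mul_conj']
        norm_cast
        simp [hz]
      exact eq_inv_of_mul_eq_one_left (by rw [mul_comm] at h1; exact h1)
    rw [hconj, inv_pow, ← zpow_natCast z m, ← zpow_natCast z p, ← zpow_neg, ← zpow_add₀ hz0]
    ring_nf
  unfold mip pip
  calc (∫ z, P.eval z * (starRingEnd ℂ) ((X ^ p : Polynomial ℂ).eval z) ∂μ)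
      = ∫ z, ∑ m ∈ Finset.range (N + 1), P.coeff m * (z ^ m * (starRingEnd ℂ) z ^ p) ∂μ := by
        refine integral_congr_ae (Filter.Eventually.of_forall fun z => ?_)
        simp only [Polynomial.eval_pow, Polynomial.eval_X]
        rw [eval_eq_sum_range' hP, Finset.sum_mul]
        simp [map_pow, mul_assoc]
    _ = ∑ m ∈ Finset.range (N + 1), ∫ z, P.coeff m * (z ^ m * (starRingEnd ℂ) z ^ p) ∂μ :=
        integral_finset_sum _ (fun m _ => (integrable_mono_conj hs m p).const_mul _)
    _ = ∑ m ∈ Finset.range (N + 1), P.coeff m * mom μ ((m : ℤ) - p) := by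
        refine Finset.sum_congr rfl fun m _ => ?_
        rw [integral_const_mul, key m]

lemma mip_row {r : ℕ} (μ : Fin r → Measure ℂ) (hμ : MopucSystem μ) (n : Fin r → ℕ)
    (P : Polynomial ℂ) (hP : P.natDegree < (∑ j, n j) + 1) (rq : (j : Fin r) × Fin (n j)) :
    mip (μ rq.1) P ((rq.2 : ℕ) + 1) =
      P.eval 0 * mom (μ rq.1) (-(((rq.2 : ℕ) : ℤ) + 1)) +
      (Mmat μ n).mulVec (fun c => P.coeff (linIdx n c + 1)) rq := by
  haveI := (hμ rq.1).1
  rw [mip_eq_sum (hμ rq.1).2.1 P (∑ j, n j) hP, Finset.sum_range_succ']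
  push_cast [Int.natCast_succ]
  rw [sum_reindex n (fun m => P.coeff (m + 1) * mom (μ rq.1) (((m:ℤ) + 1) - ((rq.2 : ℕ) + 1)))]
  rw [Matrix.mulVec]
  simp only [Mmat, Matrix.of_apply, dotProduct]
  rw [Polynomial.coeff_zero_eq_eval_zero, add_comm]
  congr 1
  · refine Finset.sum_congr rfl fun c _ => ?_
    rw [mul_comm]
    congr 2
    push_cast
    ring

lemma natDeg_lt {r : ℕ} {n : Fin r → ℕ} {P : Polynomial ℂ}
    (h : P.degree ≤ ((∑ j, n j : ℕ) : WithBot ℕ)) : P.natDegree < (∑ j, n j) + 1 :=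
  Nat.lt_succ_of_le (Polynomial.natDegree_le_iff_degree_le.mpr h)

lemma orth_zero {r : ℕ} (μ : Fin r → Measure ℂ) (hμ : MopucSystem μ) (n : Fin r → ℕ)
    (hdet : (Mmat μ n).det ≠ 0) (P : Polynomial ℂ)
    (hdeg : P.degree ≤ ((∑ j, n j : ℕ) : WithBot ℕ))
    (horth : ∀ j, ∀ p : ℕ, 1 ≤ p → p ≤ n j → mip (μ j) P p = 0)
    (h0 : P.eval 0 = 0) : P = 0 := by
  have hx : (fun c => P.coeff (linIdx n c + 1)) = 0 := by
    apply Matrix.eq_zero_of_mulVec_eq_zero hdet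
    funext rq
    have := mip_row μ hμ n P (natDeg_lt hdeg) rq
    rw [horth rq.1 ((rq.2 : ℕ) + 1) (Nat.le_add_left 1 _) rq.2.isLt, h0, zero_mul,
      zero_add] at this
    exact this.symm ▸ rfl
  ext m
  rcases m with _ | k
  · rw [Polynomial.coeff_zero_eq_eval_zero, h0]; simp
  · rcases lt_or_ge k (∑ j, n j) with hk | hk
    · obtain ⟨c, hc⟩ := exists_linIdx n k hk
      have := congrFun hx c
      simp only [Pi.zero_apply, hc] at this
      simp [this]
    · rw [Polynomial.coeff_eq_zero_of_natDegree_lt, Polynomial.coeff_zero]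
      have := natDeg_lt hdeg
      omega

def polyOf {r : ℕ} (n : Fin r → ℕ) (a : ℂ) (x : ((j : Fin r) × Fin (n j)) → ℂ) :
    Polynomial ℂ :=
  C a + ∑ c : (j : Fin r) × Fin (n j), C (x c) * X ^ (linIdx n c + 1)

lemma polyOf_eval0 {r : ℕ} (n : Fin r → ℕ) (a : ℂ) (x : ((j : Fin r) × Fin (n j)) → ℂ) :
    (polyOf n a x).eval 0 = a := by
  simp [polyOf, Polynomial.eval_finset_sum]

lemma polyOf_coeff {r : ℕ} (n : Fin r → ℕ) (a : ℂ) (x : ((j : Fin r) × Fin (n j)) → ℂ)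
    (c : (j : Fin r) × Fin (n j)) : (polyOf n a x).coeff (linIdx n c + 1) = x c := by
  unfold polyOf
  rw [Polynomial.coeff_add, Polynomial.coeff_C, if_neg (by omega), zero_add,
    Polynomial.finset_sum_coeff]
  rw [Finset.sum_eq_single_of_mem c (Finset.mem_univ c)]
  · simp [Polynomial.coeff_C_mul, Polynomial.coeff_X_pow]
  · intro c' _ hne
    rw [Polynomial.coeff_C_mul, Polynomial.coeff_X_pow, if_neg, mul_zero]
    intro h
    exact hne (linIdx_inj n (by omega))

lemma polyOf_deg {r : ℕ} (n : Fin r → ℕ) (a : ℂ) (x : ((j : Fin r) × Fin (n j)) → ℂ) :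
    (polyOf n a x).degree ≤ ((∑ j, n j : ℕ) : WithBot ℕ) := by
  unfold polyOf
  refine le_trans (Polynomial.degree_add_le _ _) (max_le ?_ ?_)
  · exact le_trans Polynomial.degree_C_le (by exact_mod_cast Nat.zero_le _)
  · refine le_trans (Polynomial.degree_sum_le _ _) ?_
    refine Finset.sup_le fun c _ => ?_
    refine le_trans (Polynomial.degree_C_mul_X_pow_le _ _) ?_
    exact_mod_cast linIdx_lt n c

lemma orth_rows {r : ℕ} {μ : Fin r → Measure ℂ} {n : Fin r → ℕ} {P : Polynomial ℂ}
    (h : ∀ rq : (j : Fin r) × Fin (n j), mip (μ rq.1) P ((rq.2 : ℕ) + 1) = 0) :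
    ∀ j, ∀ p : ℕ, 1 ≤ p → p ≤ n j → mip (μ j) P p = 0 := by
  intro j p h1 h2
  have := h ⟨j, ⟨p - 1, by omega⟩⟩
  simpa [Nat.sub_add_cancel h1] using this

lemma rows_of_orth {r : ℕ} {μ : Fin r → Measure ℂ} {n : Fin r → ℕ} {P : Polynomial ℂ}
    (h : ∀ j, ∀ p : ℕ, 1 ≤ p → p ≤ n j → mip (μ j) P p = 0) :
    ∀ rq : (j : Fin r) × Fin (n j), mip (μ rq.1) P ((rq.2 : ℕ) + 1) = 0 :=
  fun rq => h rq.1 _ (Nat.le_add_left 1 _) rq.2.isLt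

lemma orth_eq {r : ℕ} (μ : Fin r → Measure ℂ) (hμ : MopucSystem μ) (n : Fin r → ℕ)
    (hdet : (Mmat μ n).det ≠ 0) (P Q : Polynomial ℂ)
    (hdegP : P.degree ≤ ((∑ j, n j : ℕ) : WithBot ℕ))
    (hdegQ : Q.degree ≤ ((∑ j, n j : ℕ) : WithBot ℕ))
    (horthP : ∀ j, ∀ p : ℕ, 1 ≤ p → p ≤ n j → mip (μ j) P p = 0)
    (horthQ : ∀ j, ∀ p : ℕ, 1 ≤ p → p ≤ n j → mip (μ j) Q p = 0)
    (h0 : P.eval 0 = Q.eval 0) : P = Q := by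
  have hx : ((fun c => P.coeff (linIdx n c + 1)) - (fun c => Q.coeff (linIdx n c + 1)))
      = 0 := by
    apply Matrix.eq_zero_of_mulVec_eq_zero hdet
    rw [Matrix.mulVec_sub]
    funext rq
    have h1 := mip_row μ hμ n P (natDeg_lt hdegP) rq
    have h2 := mip_row μ hμ n Q (natDeg_lt hdegQ) rq
    rw [rows_of_orth horthP rq] at h1
    rw [rows_of_orth horthQ rq] at h2
    have : (Mmat μ n).mulVec (fun c => P.coeff (linIdx n c + 1)) rq
        = (Mmat μ n).mulVec (fun c => Q.coeff (linIdx n c + 1)) rq := by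
      rw [h0] at h1
      linear_combination h2 - h1
    simp [Pi.sub_apply, this]
  ext m
  rcases m with _ | k
  · rw [Polynomial.coeff_zero_eq_eval_zero, Polynomial.coeff_zero_eq_eval_zero, h0]
  · rcases lt_or_ge k (∑ j, n j) with hk | hk
    · obtain ⟨c, hc⟩ := exists_linIdx n k hk
      have := congrFun hx c
      simp only [Pi.sub_apply, Pi.zero_apply, hc, sub_eq_zero] at this
      exact this
    · rw [Polynomial.coeff_eq_zero_of_natDegree_lt (by have := natDeg_lt hdegP; omega),
        Polynomial.coeff_eq_zero_of_natDegree_lt (by have := natDeg_lt hdegQ; omega)]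

lemma mip_add {μ : Measure ℂ} [IsProbabilityMeasure μ]
    (hs : μ ((Metric.sphere (0 : ℂ) 1)ᶜ) = 0) (P Q : Polynomial ℂ) (N : ℕ)
    (hP : P.natDegree < N + 1) (hQ : Q.natDegree < N + 1) (p : ℕ) :
    mip μ (P + Q) p = mip μ P p + mip μ Q p := by
  have hPQ : (P + Q).natDegree < N + 1 :=
    lt_of_le_of_lt (Polynomial.natDegree_add_le P Q) (by omega)
  rw [mip_eq_sum hs P N hP p, mip_eq_sum hs Q N hQ p, mip_eq_sum hs (P + Q) N hPQ p,
    ← Finset.sum_add_distrib]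
  refine Finset.sum_congr rfl fun m _ => ?_
  rw [Polynomial.coeff_add, add_mul]

lemma kernel_poly {r : ℕ} (μ : Fin r → Measure ℂ) (hμ : MopucSystem μ) (n : Fin r → ℕ)
    (hdet : (Mmat μ n).det = 0) :
    ∃ P₀ : Polynomial ℂ, IsTypeIIStar μ n P₀ ∧ P₀.eval 0 = 0 := by
  obtain ⟨v, hv0, hvker⟩ := Matrix.exists_mulVec_eq_zero_iff.mpr hdet
  refine ⟨polyOf n 0 v, ⟨?_, polyOf_deg n 0 v, ?_⟩, polyOf_eval0 n 0 v⟩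
  · obtain ⟨c, hc⟩ := Function.ne_iff.mp hv0
    intro h
    apply hc
    have := polyOf_coeff n 0 v c
    rw [h, Polynomial.coeff_zero] at this
    exact this.symm
  · refine orth_rows fun rq => ?_
    rw [mip_row μ hμ n _ (natDeg_lt (polyOf_deg n 0 v)) rq]
    have hco : (fun c => (polyOf n 0 v).coeff (linIdx n c + 1)) = v :=
      funext (polyOf_coeff n 0 v)
    rw [hco, hvker, polyOf_eval0]
    simp

/-- for `n ≠ 0`, normality is equivalent to: every type II* MOP `Φ*` for `n`
has `Φ*(0) ≠ 0`; and to: there is a unique type II* MOP for `n` with `Φ*(0) = 1`. -/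
theorem normality_typeIIStar (r : ℕ) (hr : 0 < r) (μ : Fin r → Measure ℂ) (hμ : MopucSystem μ)
    (n : Fin r → ℕ) (hn : n ≠ 0) :
    (NormalIndex μ n ↔
      ∀ P : Polynomial ℂ, IsTypeIIStar μ n P → P.eval 0 ≠ 0) ∧
    (NormalIndex μ n ↔
      ∃! P : Polynomial ℂ, IsTypeIIStar μ n P ∧ P.eval 0 = 1) := by
  constructor
  · constructor
    · intro hdet P hP h0
      exact hP.1 (orth_zero μ hμ n hdet P hP.2.1 hP.2.2 h0)
    · intro h2
      by_contra hdet
      rw [NormalIndex, not_not] at hdet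
      obtain ⟨P₀, hstar, h00⟩ := kernel_poly μ hμ n hdet
      exact h2 P₀ hstar h00
  · constructor
    · intro hdet
      set v : ((j : Fin r) × Fin (n j)) → ℂ :=
        fun rq => -(mom (μ rq.1) (-(((rq.2 : ℕ) : ℤ) + 1))) with hv
      set x := (Mmat μ n)⁻¹.mulVec v with hxdef
      have hMx : (Mmat μ n).mulVec x = v := by
        rw [hxdef, Matrix.mulVec_mulVec,
          Matrix.mul_nonsing_inv _ (isUnit_iff_ne_zero.mpr hdet), Matrix.one_mulVec]
      set P := polyOf n 1 x with hPdef
      have hco : (fun c => P.coeff (linIdx n c + 1)) = x := funext (polyOf_coeff n 1 x)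
      have horthP : ∀ j, ∀ p : ℕ, 1 ≤ p → p ≤ n j → mip (μ j) P p = 0 := by
        refine orth_rows fun rq => ?_
        rw [mip_row μ hμ n _ (natDeg_lt (polyOf_deg n 1 x)) rq, hco, hMx, polyOf_eval0]
        simp [hv]
      refine ⟨P, ⟨⟨?_, polyOf_deg n 1 x, horthP⟩, polyOf_eval0 n 1 x⟩, ?_⟩
      · intro h
        have := polyOf_eval0 n 1 x
        rw [← hPdef, h] at this
        simp at this
      · rintro Q ⟨hQstar, hQ0⟩
        exact orth_eq μ hμ n hdet Q P hQstar.2.1 (polyOf_deg n 1 x) hQstar.2.2 horthP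
          (by rw [hQ0, polyOf_eval0])
    · intro h3
      by_contra hdet
      rw [NormalIndex, not_not] at hdet
      obtain ⟨P₀, hstar, h00⟩ := kernel_poly μ hμ n hdet
      obtain ⟨P, ⟨hPstar, hP0⟩, huniq⟩ := h3
      have heval : (P + P₀).eval 0 = 1 := by
        rw [Polynomial.eval_add, hP0, h00, add_zero]
      have horth : ∀ j, ∀ p : ℕ, 1 ≤ p → p ≤ n j → mip (μ j) (P + P₀) p = 0 := by
        intro j p h1 h2
        haveI := (hμ j).1
        rw [mip_add (hμ j).2.1 P P₀ (∑ i, n i) (natDeg_lt hPstar.2.1) (natDeg_lt hstar.2.1),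
          hPstar.2.2 j p h1 h2, hstar.2.2 j p h1 h2, add_zero]
      have hkey : P + P₀ = P := by
        refine huniq (P + P₀) ⟨⟨?_, ?_, horth⟩, heval⟩
        · intro h
          rw [h] at heval
          simp at heval
        · exact le_trans (Polynomial.degree_add_le _ _) (max_le hPstar.2.1 hstar.2.1)
      exact hstar.1 (by simpa using hkey)
end
end

section
/- Let n ∈ ℤ_{≥0}^r and 1 ≤ k ≤ r with n_k ≥ 1. The index n − e_k is normal if and only if deg Λ_k = n_k − 1 for every type I multiple orthogonal polynomial (Λ_1,…,Λ_r) for the index n. -/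
open MeasureTheory Polynomial

noncomputable section

namespace MopAux

lemma ae_sphere {μ : Measure ℂ} (h : μ ((Metric.sphere (0 : ℂ) 1)ᶜ) = 0) :
    ∀ᵐ z ∂μ, z ∈ Metric.sphere (0 : ℂ) 1 := by
  refine MeasureTheory.measure_mono_null ?_ h
  intro z hz
  simpa using hz

lemma conj_eq_inv {z : ℂ} (hz : z ∈ Metric.sphere (0 : ℂ) 1) :
    (starRingEnd ℂ) z = z⁻¹ := by
  have h1 : ‖z‖ = 1 := by simpa using hz
  rw [Complex.inv_def]
  have : Complex.normSq z = 1 := by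
    rw [Complex.normSq_eq_norm_sq]
    simp [h1]
  rw [this]
  simp

lemma sphere_ne_zero {z : ℂ} (hz : z ∈ Metric.sphere (0 : ℂ) 1) : z ≠ 0 := by
  have h1 : ‖z‖ = 1 := by simpa using hz
  intro h; rw [h] at h1; simp at h1


lemma mom_neg {μ : Measure ℂ} (h : μ ((Metric.sphere (0 : ℂ) 1)ᶜ) = 0) (t : ℤ) :
    mom μ (-t) = (starRingEnd ℂ) (mom μ t) := by
  unfold mom
  rw [← integral_conj]
  refine integral_congr_ae ?_
  filter_upwards [ae_sphere h] with z hz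
  rw [map_zpow₀, conj_eq_inv hz, inv_zpow, ← zpow_neg]

lemma integrable_monomials {μ : Measure ℂ} [IsFiniteMeasure μ]
    (h : μ ((Metric.sphere (0 : ℂ) 1)ᶜ) = 0) (a b : ℕ) :
    Integrable (fun z : ℂ => z ^ a * (starRingEnd ℂ) (z ^ b)) μ := by
  refine Integrable.mono' (integrable_const 1) ?_ ?_
  · exact ((continuous_pow a).mul
      (Complex.continuous_conj.comp (continuous_pow b))).aestronglyMeasurable
  · filter_upwards [ae_sphere h] with z hz
    have h1 : ‖z‖ = 1 := by simpa using hz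
    simp [h1]

lemma mip_expand {μ : Measure ℂ} [IsFiniteMeasure μ]
    (h : μ ((Metric.sphere (0 : ℂ) 1)ᶜ) = 0) {P : Polynomial ℂ} {d : ℕ}
    (hP : P.degree < (d : WithBot ℕ)) (p : ℕ) :
    mip μ P p = ∑ q ∈ Finset.range d, P.coeff q * mom μ ((q : ℤ) - (p : ℤ)) := by
  rcases eq_or_ne P 0 with rfl | hP0
  · simp [mip, pip]
  have hnd : P.natDegree < d := (Polynomial.natDegree_lt_iff_degree_lt hP0).mpr hP
  have key : ∀ q : ℕ, (∫ z, z ^ q * (starRingEnd ℂ) (z ^ p) ∂μ) = mom μ ((q : ℤ) - (p : ℤ)) := by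
    intro q
    unfold mom
    refine integral_congr_ae ?_
    filter_upwards [ae_sphere h] with z hz
    have hz0 : z ≠ 0 := sphere_ne_zero hz
    rw [sub_eq_add_neg, zpow_add₀ hz0, zpow_natCast, map_pow, conj_eq_inv hz,
      zpow_neg, zpow_natCast, inv_pow]
  calc mip μ P p
      = ∫ z, (∑ q ∈ Finset.range d, P.coeff q * z ^ q) * (starRingEnd ℂ) (z ^ p) ∂μ := by
        unfold mip pip
        refine integral_congr_ae (Filter.Eventually.of_forall fun z => ?_)
        dsimp only
        rw [Polynomial.eval_pow, Polynomial.eval_X, ← Polynomial.eval_eq_sum_range' hnd]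
    _ = ∫ z, ∑ q ∈ Finset.range d, P.coeff q * (z ^ q * (starRingEnd ℂ) (z ^ p)) ∂μ := by
        simp_rw [Finset.sum_mul, mul_assoc]
    _ = ∑ q ∈ Finset.range d, ∫ z, P.coeff q * (z ^ q * (starRingEnd ℂ) (z ^ p)) ∂μ :=
        integral_finset_sum _ (fun q _ => ((integrable_monomials h q p).const_mul _))
    _ = ∑ q ∈ Finset.range d, P.coeff q * mom μ ((q : ℤ) - (p : ℤ)) := by
        refine Finset.sum_congr rfl fun q _ => ?_
        rw [integral_const_mul, key q]


variable {r : ℕ}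

lemma aux_mono {n : Fin r → ℕ} {j j' : Fin r} (h : j < j') (q : ℕ) (hq : q < n j) :
    (∑ i ∈ Finset.univ.filter (fun i => i < j), n i) + q <
      ∑ i ∈ Finset.univ.filter (fun i => i < j'), n i := by
  have h1 : insert j (Finset.univ.filter (fun i => i < j)) ⊆
      Finset.univ.filter (fun i => i < j') := by
    intro i hi
    simp only [Finset.mem_insert, Finset.mem_filter, Finset.mem_univ, true_and] at *
    rcases hi with rfl | hi
    · exact h
    · exact lt_trans hi h
  have h2 := Finset.sum_le_sum_of_subset (f := n) h1
  rw [Finset.sum_insert (by simp)] at h2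
  omega

lemma linIdx_lt (n : Fin r → ℕ) (c : (j : Fin r) × Fin (n j)) : linIdx n c < ∑ j, n j := by
  obtain ⟨j, q⟩ := c
  unfold linIdx
  have h1 : insert j (Finset.univ.filter (fun i => i < j)) ⊆ (Finset.univ : Finset (Fin r)) :=
    Finset.subset_univ _
  have h2 := Finset.sum_le_sum_of_subset (f := n) h1
  rw [Finset.sum_insert (by simp)] at h2
  have := q.isLt
  simp only at *
  omega

lemma linIdx_injective (n : Fin r → ℕ) : Function.Injective (linIdx n) := by
  intro c c' h
  obtain ⟨j, q⟩ := c
  obtain ⟨j', q'⟩ := c'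
  unfold linIdx at h
  simp only at h
  rcases lt_trichotomy j j' with hj | hj | hj
  · have := aux_mono (n := n) hj (q : ℕ) q.isLt
    omega
  · subst hj
    have : (q : ℕ) = (q' : ℕ) := by omega
    simp [Fin.ext_iff, this]
  · have := aux_mono (n := n) hj (q' : ℕ) q'.isLt
    omega

lemma linIdx_surj (n : Fin r → ℕ) {p : ℕ} (hp : p < ∑ j, n j) :
    ∃ c, linIdx n c = p := by
  have hcard : Fintype.card ((j : Fin r) × Fin (n j)) = Fintype.card (Fin (∑ j, n j)) := by
    simp
  have hbij : Function.Bijective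
      (fun c : (j : Fin r) × Fin (n j) => (⟨linIdx n c, linIdx_lt n c⟩ : Fin (∑ j, n j))) := by
    rw [Fintype.bijective_iff_injective_and_card]
    refine ⟨fun c c' h => linIdx_injective n ?_, hcard⟩
    simpa [Fin.ext_iff] using h
  obtain ⟨c, hc⟩ := hbij.2 ⟨p, hp⟩
  exact ⟨c, congrArg Fin.val hc⟩

lemma eSub_le (n : Fin r → ℕ) (k j : Fin r) : eSub n k j ≤ n j := by
  unfold eSub
  rcases eq_or_ne j k with rfl | hj
  · simp
  · rw [Function.update_of_ne hj]

lemma eSub_eq_of_ne (n : Fin r → ℕ) {k j : Fin r} (hj : j ≠ k) : eSub n k j = n j :=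
  Function.update_of_ne hj _ _

lemma eSub_self (n : Fin r → ℕ) (k : Fin r) : eSub n k k = n k - 1 :=
  Function.update_self _ _ _

lemma sum_eSub (n : Fin r → ℕ) (k : Fin r) (hk : 1 ≤ n k) :
    (∑ j, eSub n k j) + 1 = ∑ j, n j := by
  unfold eSub
  rw [Finset.sum_update_of_mem (Finset.mem_univ k),
    ← Finset.add_sum_erase _ n (Finset.mem_univ k), Finset.sdiff_singleton_eq_erase]
  omega

lemma coeff_mk {d : ℕ} (a : Fin d → ℂ) (t : ℕ) :
    (∑ q : Fin d, Polynomial.C (a q) * Polynomial.X ^ (q : ℕ)).coeff t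
      = if h : t < d then a ⟨t, h⟩ else 0 := by
  rw [Polynomial.finset_sum_coeff]
  simp_rw [Polynomial.coeff_C_mul, Polynomial.coeff_X_pow]
  split
  · next h =>
    rw [Finset.sum_eq_single (⟨t, h⟩ : Fin d)]
    · simp
    · intro q _ hq
      rw [if_neg, mul_zero]
      intro he
      exact hq (Fin.ext he.symm)
    · simp
  · next h =>
    refine Finset.sum_eq_zero fun q _ => ?_
    rw [if_neg, mul_zero]
    intro he
    exact h (he ▸ q.isLt)

lemma degree_mk_lt {d : ℕ} (a : Fin d → ℂ) :
    (∑ q : Fin d, Polynomial.C (a q) * Polynomial.X ^ (q : ℕ)).degree < (d : WithBot ℕ) := by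
  rw [Polynomial.degree_lt_iff_coeff_zero]
  intro t ht
  rw [coeff_mk, dif_neg]
  omega

lemma degree_eq_iff' {P : Polynomial ℂ} {d : ℕ} (hP : P.degree < ((d + 1 : ℕ) : WithBot ℕ)) :
    P.degree = (d : WithBot ℕ) ↔ P.coeff d ≠ 0 := by
  constructor
  · exact Polynomial.coeff_ne_zero_of_eq_degree
  · intro h
    refine le_antisymm ?_ (Polynomial.le_degree_of_ne_zero h)
    rw [Polynomial.degree_lt_iff_coeff_zero] at hP
    by_contra hlt
    push_neg at hlt
    have hP0 : P ≠ 0 := fun h0 => by simp [h0] at h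
    have he := Polynomial.degree_eq_natDegree hP0
    rw [he, Nat.cast_lt] at hlt
    exact Polynomial.coeff_ne_zero_of_eq_degree he (hP _ (by omega))


lemma core (μ : Fin r → Measure ℂ) (hμ : MopucSystem μ)
    (n : Fin r → ℕ) (k : Fin r)
    (L : Fin r → Polynomial ℂ) (hdeg : ∀ j, (L j).degree < ((n j : ℕ) : WithBot ℕ))
    (h0 : (L k).coeff (n k - 1) = 0) (c : (j : Fin r) × Fin (eSub n k j)) :
    Matrix.vecMul (fun s : (j : Fin r) × Fin (eSub n k j) => (L s.1).coeff s.2)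
        ((Mmat μ (eSub n k)).map (starRingEnd ℂ)) c
      = ∑ j, mip (μ j) (L j) (linIdx (eSub n k) c) := by
  set p := linIdx (eSub n k) c with hp
  have hNe : ∀ s : (j : Fin r) × Fin (eSub n k j),
      ((Mmat μ (eSub n k)).map (starRingEnd ℂ)) s c
        = mom (μ s.1) (((s.2 : ℕ) : ℤ) - (p : ℤ)) := by
    intro s
    have h1 := mom_neg (μ := μ s.1) (hμ s.1).2.1 ((p : ℤ) - ((s.2 : ℕ) : ℤ))
    rw [neg_sub] at h1
    simp only [Matrix.map_apply, Mmat, Matrix.of_apply]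
    rw [← h1]
  have hmip : ∀ j, mip (μ j) (L j) p
      = ∑ q ∈ Finset.range (n j), (L j).coeff q * mom (μ j) ((q : ℤ) - (p : ℤ)) := by
    intro j
    haveI := (hμ j).1
    exact mip_expand (hμ j).2.1 (hdeg j) p
  have hrange : ∀ j, ∑ q ∈ Finset.range (n j), (L j).coeff q * mom (μ j) ((q : ℤ) - (p : ℤ))
      = ∑ q ∈ Finset.range (eSub n k j), (L j).coeff q * mom (μ j) ((q : ℤ) - (p : ℤ)) := by
    intro j
    rcases eq_or_ne j k with rfl | hj
    · rcases Nat.eq_zero_or_pos (n j) with h1 | h1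
      · rw [eSub_self, h1]
      have h2 : Finset.range (n j) = Finset.range ((n j - 1) + 1) := by
        congr 1; omega
      rw [eSub_self, h2, Finset.sum_range_succ, h0, zero_mul, add_zero]
    · rw [eSub_eq_of_ne n hj]
  calc Matrix.vecMul (fun s : (j : Fin r) × Fin (eSub n k j) => (L s.1).coeff s.2)
        ((Mmat μ (eSub n k)).map (starRingEnd ℂ)) c
      = ∑ s : (j : Fin r) × Fin (eSub n k j),
          (L s.1).coeff s.2 * mom (μ s.1) (((s.2 : ℕ) : ℤ) - (p : ℤ)) := by
        simp only [Matrix.vecMul, dotProduct]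
        exact Finset.sum_congr rfl fun s _ => by rw [hNe s]
    _ = ∑ j, ∑ q ∈ Finset.range (eSub n k j),
          (L j).coeff q * mom (μ j) ((q : ℤ) - (p : ℤ)) := by
        rw [← Finset.univ_sigma_univ, Finset.sum_sigma]
        exact Finset.sum_congr rfl fun j _ => Fin.sum_univ_eq_sum_range
          (fun q => (L j).coeff q * mom (μ j) ((q : ℤ) - (p : ℤ))) _
    _ = ∑ j, mip (μ j) (L j) p := by
        refine Finset.sum_congr rfl fun j _ => ?_
        rw [hmip j, hrange j]

end MopAux

/-- for `n k ≥ 1`, the index `n − e_k` is normal iff `deg (Λ k) = n k − 1`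
for every type I MOP `(Λ_1,…,Λ_r)` for the index `n`. -/
theorem normality_step_down (r : ℕ) (hr : 0 < r) (μ : Fin r → Measure ℂ) (hμ : MopucSystem μ)
    (n : Fin r → ℕ) (k : Fin r) (hk : 1 ≤ n k) :
    NormalIndex μ (eSub n k) ↔
      ∀ L : Fin r → Polynomial ℂ, IsTypeI μ n L →
        (L k).degree = ((n k - 1 : ℕ) : WithBot ℕ) := by
  classical
  have hsum := MopAux.sum_eSub n k hk
  have hmapdet : ((Mmat μ (eSub n k)).map (starRingEnd ℂ)).det
      = (starRingEnd ℂ) ((Mmat μ (eSub n k)).det) := by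
    rw [RingHom.map_det, RingHom.mapMatrix_apply]
  constructor
  · intro hnorm L hL
    obtain ⟨hL0, hdeg, horth⟩ := hL
    have hlt : (L k).degree < (((n k - 1) + 1 : ℕ) : WithBot ℕ) := by
      have h1 := hdeg k
      rwa [show (n k - 1) + 1 = n k by omega]
    rw [MopAux.degree_eq_iff' hlt]
    by_contra h0
    have hx : Matrix.vecMul (fun s : (j : Fin r) × Fin (eSub n k j) => (L s.1).coeff s.2)
        ((Mmat μ (eSub n k)).map (starRingEnd ℂ)) = 0 := by
      funext c
      simp only [Pi.zero_apply]
      rw [MopAux.core μ hμ n k L hdeg h0 c]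
      refine horth _ ?_
      have h2 := MopAux.linIdx_lt (eSub n k) c
      omega
    have hdet : ((Mmat μ (eSub n k)).map (starRingEnd ℂ)).det ≠ 0 := by
      rw [hmapdet]
      simpa [NormalIndex] using hnorm
    have hx0 : (fun s : (j : Fin r) × Fin (eSub n k j) => (L s.1).coeff s.2) = 0 := by
      by_contra hne
      exact hdet (Matrix.exists_vecMul_eq_zero_iff.mp ⟨_, hne, hx⟩)
    refine absurd ?_ hL0
    funext j
    ext t
    simp only [Pi.zero_apply, Polynomial.coeff_zero]
    by_cases h1 : t < eSub n k j
    · have h2 := congrFun hx0 ⟨j, ⟨t, h1⟩⟩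
      simpa using h2
    · by_cases h2 : t < n j
      · have hjk : j = k := by
          by_contra hne
          rw [MopAux.eSub_eq_of_ne n hne] at h1
          omega
        subst hjk
        rw [MopAux.eSub_self] at h1
        have h3 : t = n j - 1 := by omega
        rw [h3]
        exact h0
      · exact Polynomial.coeff_eq_zero_of_degree_lt
          (lt_of_lt_of_le (hdeg j) (Nat.cast_le.mpr (by omega)))
  · intro hall hdet
    have hdetN : ((Mmat μ (eSub n k)).map (starRingEnd ℂ)).det = 0 := by
      rw [hmapdet, hdet, map_zero]
    obtain ⟨x, hx0, hx⟩ := Matrix.exists_vecMul_eq_zero_iff.mpr hdetN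
    set L : Fin r → Polynomial ℂ :=
      fun j => ∑ q : Fin (eSub n k j), Polynomial.C (x ⟨j, q⟩) * Polynomial.X ^ (q : ℕ)
      with hLdef
    have hcoeff : ∀ (j : Fin r) (t : ℕ),
        (L j).coeff t = if h : t < eSub n k j then x ⟨j, ⟨t, h⟩⟩ else 0 := fun j t =>
      MopAux.coeff_mk _ t
    have hdeg : ∀ j, (L j).degree < ((n j : ℕ) : WithBot ℕ) :=
      fun j => lt_of_lt_of_le (MopAux.degree_mk_lt _) (Nat.cast_le.mpr (MopAux.eSub_le n k j))
    have h0 : (L k).coeff (n k - 1) = 0 := by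
      rw [hcoeff, dif_neg]
      rw [MopAux.eSub_self]
      omega
    have hxcoeff : (fun s : (j : Fin r) × Fin (eSub n k j) => (L s.1).coeff s.2) = x := by
      funext s
      rw [hcoeff, dif_pos s.2.isLt]
    have hLne : L ≠ 0 := by
      intro hL
      apply hx0
      funext s
      have h1 : x s = (L s.1).coeff s.2 := (congrFun hxcoeff s).symm
      rw [h1, hL]
      simp
    have htypeI : IsTypeI μ n L := by
      refine ⟨hLne, hdeg, fun p hp => ?_⟩
      have hps : p < ∑ j, eSub n k j := by omega
      obtain ⟨c, hc⟩ := MopAux.linIdx_surj _ hps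
      rw [← hc, ← MopAux.core μ hμ n k L hdeg h0 c, hxcoeff, hx]
      simp
    exact Polynomial.coeff_ne_zero_of_eq_degree (hall L htypeI) h0
end
end

section
/- Let n ∈ ℤ_{≥0}^r and 1 ≤ k ≤ r, and assume n and n + e_k are normal. Then ⟨Φ_n, Λ_{n+e_k,k}⟩_k = 1, and in fact Σ_{m=1}^r ⟨Φ_n, Λ_{n+e_k,m}⟩_m = 1 with every term with m ≠ k equal to 0. -/
open MeasureTheory Polynomial

noncomputable section

lemma integrable_pq {r : ℕ} {μ : Fin r → Measure ℂ} (hμ : MopucSystem μ) (j : Fin r)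
    (P Q : Polynomial ℂ) :
    Integrable (fun z => P.eval z * (starRingEnd ℂ) (Q.eval z)) (μ j) := by
  obtain ⟨hprob, hsphere, -⟩ := hμ j
  have hf : Continuous fun z => P.eval z * (starRingEnd ℂ) (Q.eval z) := by continuity
  obtain ⟨C, hC⟩ := (isCompact_sphere (0:ℂ) 1).exists_bound_of_continuousOn hf.continuousOn
  haveI := hprob
  refine (integrable_const C).mono' hf.aestronglyMeasurable ?_
  have hae : ∀ᵐ z ∂ μ j, z ∈ Metric.sphere (0:ℂ) 1 := by
    rw [ae_iff]
    simpa [Set.compl_def] using hsphere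
  filter_upwards [hae] with z hz
  simpa using hC z hz

lemma pip_eq_sum_mip {r : ℕ} {μ : Fin r → Measure ℂ} (hμ : MopucSystem μ) (j : Fin r)
    (P Q : Polynomial ℂ) (N : ℕ) (hN : Q.natDegree < N) :
    pip (μ j) P Q = ∑ p ∈ Finset.range N, (starRingEnd ℂ) (Q.coeff p) * mip (μ j) P p := by
  have hpt : ∀ z : ℂ, P.eval z * (starRingEnd ℂ) (Q.eval z)
      = ∑ p ∈ Finset.range N, (starRingEnd ℂ) (Q.coeff p) *
          (P.eval z * (starRingEnd ℂ) ((X ^ p : Polynomial ℂ).eval z)) := by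
    intro z
    rw [Polynomial.eval_eq_sum_range' hN, map_sum, Finset.mul_sum]
    refine Finset.sum_congr rfl fun p _ => ?_
    simp only [map_mul, map_pow, eval_pow, eval_X]
    ring
  unfold pip mip pip
  simp_rw [hpt]
  rw [integral_finset_sum _ (fun p _ => ((integrable_pq hμ j P (X ^ p)).const_mul _))]
  exact Finset.sum_congr rfl fun p _ => integral_const_mul _ _

lemma pip_eq_sum_coeff {r : ℕ} {μ : Fin r → Measure ℂ} (hμ : MopucSystem μ) (j : Fin r)
    (P Q : Polynomial ℂ) (N : ℕ) (hN : P.natDegree < N) :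
    pip (μ j) P Q = ∑ p ∈ Finset.range N, P.coeff p * (starRingEnd ℂ) (mip (μ j) Q p) := by
  have hpt : ∀ z : ℂ, P.eval z * (starRingEnd ℂ) (Q.eval z)
      = ∑ p ∈ Finset.range N, P.coeff p *
          ((X ^ p : Polynomial ℂ).eval z * (starRingEnd ℂ) (Q.eval z)) := by
    intro z
    rw [Polynomial.eval_eq_sum_range' hN, Finset.sum_mul]
    refine Finset.sum_congr rfl fun p _ => ?_
    simp only [eval_pow, eval_X]
    ring
  have key : ∀ p : ℕ, (∫ z, (X ^ p : Polynomial ℂ).eval z * (starRingEnd ℂ) (Q.eval z) ∂ μ j)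
      = (starRingEnd ℂ) (mip (μ j) Q p) := by
    intro p
    unfold mip pip
    rw [← integral_conj]
    refine integral_congr_ae (Filter.Eventually.of_forall fun z => ?_)
    simp [mul_comm]
  unfold pip
  simp_rw [hpt]
  rw [integral_finset_sum _ (fun p _ => ((integrable_pq hμ j (X ^ p) Q).const_mul _))]
  refine Finset.sum_congr rfl fun p _ => ?_
  rw [integral_const_mul, key]

/-- biorthogonality: if `n` and `n + e_k` are normal, then
`⟨Φ_n, Λ_{n+e_k,k}⟩_k = 1`, every term `⟨Φ_n, Λ_{n+e_k,m}⟩_m` with `m ≠ k` vanishes, and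
`∑_m ⟨Φ_n, Λ_{n+e_k,m}⟩_m = 1`. -/
theorem biorthogonality (r : ℕ) (hr : 0 < r) (μ : Fin r → Measure ℂ) (hμ : MopucSystem μ)
    (n : Fin r → ℕ) (k : Fin r)
    (hnorm : NormalIndex μ n) (hnorm' : NormalIndex μ (eAdd n k))
    (Φ : Polynomial ℂ) (hΦ : IsPhi μ n Φ)
    (L : Fin r → Polynomial ℂ) (hL : IsLambda μ (eAdd n k) L) :
    pip (μ k) Φ (L k) = 1 ∧
    (∀ m, m ≠ k → pip (μ m) Φ (L m) = 0) ∧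
    ∑ m, pip (μ m) Φ (L m) = 1 := by
  obtain ⟨⟨hΦne, hΦdeg, hΦorth⟩, hmonic, hnat⟩ := hΦ
  obtain ⟨⟨hLne, hLdeg, hLorth⟩, hLnorm⟩ := hL
  set S := ∑ j, n j with hS
  have hsum : ∑ j, eAdd n k j = S + 1 := by
    unfold eAdd
    rw [Finset.sum_update_of_mem (Finset.mem_univ k), hS,
        Finset.sum_eq_add_sum_sdiff_singleton_of_mem (Finset.mem_univ k) n]
    ring
  have hzero : ∀ m, m ≠ k → pip (μ m) Φ (L m) = 0 := by
    intro m hm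
    by_cases h0 : L m = 0
    · simp [pip, h0]
    · rw [pip_eq_sum_mip hμ m Φ (L m) ((L m).natDegree + 1) (Nat.lt_succ_self _)]
      refine Finset.sum_eq_zero fun p hp => ?_
      have hdeg : (L m).natDegree < n m := by
        have h := hLdeg m
        rw [eAdd, Function.update_of_ne hm] at h
        exact (Polynomial.natDegree_lt_iff_degree_lt h0).2 h
      have hpn : p < n m :=
        lt_of_le_of_lt (Nat.lt_succ_iff.mp (Finset.mem_range.mp hp)) hdeg
      rw [hΦorth m p hpn, mul_zero]
  have hsum1 : ∑ m, pip (μ m) Φ (L m) = 1 := by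
    have hrw : ∀ m : Fin r, pip (μ m) Φ (L m)
        = ∑ p ∈ Finset.range (S + 1), Φ.coeff p * (starRingEnd ℂ) (mip (μ m) (L m) p) :=
      fun m => pip_eq_sum_coeff hμ m Φ (L m) (S + 1) (by rw [hnat]; omega)
    simp_rw [hrw]
    rw [Finset.sum_comm]
    have hinner : ∀ p ∈ Finset.range (S + 1),
        (∑ m, Φ.coeff p * (starRingEnd ℂ) (mip (μ m) (L m) p))
          = Φ.coeff p * (starRingEnd ℂ) (∑ m, mip (μ m) (L m) p) := by
      intro p _
      rw [← Finset.mul_sum, ← map_sum]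
    rw [Finset.sum_congr rfl hinner, Finset.sum_range_succ]
    have hlast : ∑ m, mip (μ m) (L m) S = 1 := by
      have h := hLnorm
      rwa [hsum, Nat.add_sub_cancel] at h
    have hcoeff : Φ.coeff S = 1 := by
      rw [← hnat]; exact hmonic.coeff_natDegree
    have hz : ∀ p ∈ Finset.range S,
        Φ.coeff p * (starRingEnd ℂ) (∑ m, mip (μ m) (L m) p) = 0 := by
      intro p hp
      have hps := Finset.mem_range.mp hp
      rw [hLorth p (by rw [hsum]; omega)]
      simp
    rw [Finset.sum_eq_zero hz, hcoeff, hlast]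
    simp
  have hk : pip (μ k) Φ (L k) = 1 :=
    (Finset.sum_eq_single_of_mem k (Finset.mem_univ k)
      (fun m _ hm => hzero m hm)).symm.trans hsum1
  exact ⟨hk, hzero, hsum1⟩
end
end
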